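/- Let P be the uniform probability measure on the horizontal diameter {(x,0) : −1 ≤ x ≤ 1} of the unit circle in ℝ², and let the constraint be the unit circle. Then for every n ≥ 2, the nth constrained quantization error equals 1/3; in particular, the two-point set {(−1,0),(1,0)} remains an optimal set of n points for every n ≥ 2, so an optimal set of n points need not contain exactly n elements even though the support of P is infinite. -/

import Mathlib

open MeasureTheory Real Set

noncomputable section

abbrev E2 : Type := EuclideanSpace ℝ (Fin 2)

/-- The point `(x, y)` of the Euclidean plane. -/
def cpt (x y : ℝ) : E2 := WithLp.toLp 2 ![x, y]

/-- Distortion error of `P` with respect to the set `α`: `∫ min_{a ∈ α} ‖x - a‖² dP(x)`. -/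
def cDistortion (P : Measure E2) (α : Set E2) : ℝ :=
  ∫ x, (⨅ a : α, dist x (a : E2) ^ 2) ∂P

/-- The `n`th constrained quantization error of `P` with constraint set `S`. -/
def cqError (P : Measure E2) (S : Set E2) (n : ℕ) : ℝ :=
  sInf {v : ℝ | ∃ α : Set E2, α ⊆ S ∧ α.Finite ∧ 1 ≤ α.ncard ∧ α.ncard ≤ n ∧
    v = cDistortion P α}

/-- `α` is an optimal set of `n` points for `P` with constraint `S`: it is an admissible set
attaining the `n`th constrained quantization error. -/
def IsOptimalNSet (P : Measure E2) (S : Set E2) (n : ℕ) (α : Set E2) : Prop :=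
  α ⊆ S ∧ α.Finite ∧ 1 ≤ α.ncard ∧ α.ncard ≤ n ∧ cDistortion P α = cqError P S n

/-- The uniform probability distribution on the interval `[a, b]`. -/
def uniformIccM (a b : ℝ) : Measure ℝ :=
  (ENNReal.ofReal (b - a))⁻¹ • volume.restrict (Icc a b)

/-- The point of the line `y = m x + c` with abscissa `t`. -/
def segPt (m c t : ℝ) : E2 := cpt t (m * t + c)


/-!
On the unit circle, the reverse triangle inequality gives `‖(x, 0) - p‖ ≥ 1 - |x|` for every
point `p` and every `x ∈ [-1, 1]`, so any admissible set has distortion at least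
`∫ (1 - |x|)² dP = 1/3`. The antipodal pair `{(-1, 0), (1, 0)}` attains this bound pointwise: it
contains a point of the circle nearest to each `(x, 0)`, so no number of extra points helps.
-/

open Metric

lemma iInf_dist_sq_eq_infDist_sq {X : Type*} [PseudoMetricSpace X] {s : Set X}
    (hs : IsCompact s) (hne : s.Nonempty) (x : X) :
    ⨅ a : s, dist x a ^ 2 = infDist x s ^ 2 := by
  have : Nonempty s := hne.to_subtype
  obtain ⟨b, hb, hxb⟩ := hs.exists_infDist_eq_dist hne x
  refine le_antisymm ?_ (le_ciInf fun a => ?_)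
  · have hbdd : BddBelow (Set.range fun a : s => dist x a ^ 2) :=
      ⟨0, by rintro _ ⟨a, rfl⟩; positivity⟩
    exact hxb ▸ ciInf_le hbdd ⟨b, hb⟩
  · exact pow_le_pow_left₀ infDist_nonneg (infDist_le_dist_of_mem a.2) 2

lemma cDistortion_eq_integral_infDist_sq (P : Measure E2) {α : Set E2} (hα : IsCompact α)
    (hne : α.Nonempty) : cDistortion P α = ∫ x, infDist x α ^ 2 ∂P := by
  simp only [cDistortion, iInf_dist_sq_eq_infDist_sq hα hne]

lemma isOptimalNSet_of_forall_le {P : Measure E2} {S α₀ : Set E2} {n : ℕ} (hsub : α₀ ⊆ S)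
    (hfin : α₀.Finite) (hpos : 1 ≤ α₀.ncard) (hle : α₀.ncard ≤ n)
    (hmin : ∀ α ⊆ S, α.Finite → 1 ≤ α.ncard → α.ncard ≤ n →
      cDistortion P α₀ ≤ cDistortion P α) :
    IsOptimalNSet P S n α₀ := by
  have hmem : cDistortion P α₀ ∈ {v : ℝ | ∃ α : Set E2, α ⊆ S ∧ α.Finite ∧ 1 ≤ α.ncard ∧
      α.ncard ≤ n ∧ v = cDistortion P α} := ⟨α₀, hsub, hfin, hpos, hle, rfl⟩
  have hlb : cDistortion P α₀ ∈ lowerBounds {v : ℝ | ∃ α : Set E2, α ⊆ S ∧ α.Finite ∧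
      1 ≤ α.ncard ∧ α.ncard ≤ n ∧ v = cDistortion P α} := by
    rintro _ ⟨α, hαS, hαfin, hαpos, hαle, rfl⟩
    exact hmin α hαS hαfin hαpos hαle
  exact ⟨hsub, hfin, hpos, hle, le_antisymm (le_csInf ⟨_, hmem⟩ hlb) (csInf_le ⟨_, hlb⟩ hmem)⟩

lemma abs_dist_sub_radius_le_infDist {X : Type*} [PseudoMetricSpace X] {s : Set X} {c : X}
    {r : ℝ} (hs : s ⊆ sphere c r) (hne : s.Nonempty) (x : X) :
    |dist x c - r| ≤ infDist x s :=
  (le_infDist hne).2 fun a ha => mem_sphere.1 (hs ha) ▸ abs_dist_sub_le x a c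

lemma integral_uniformIccM {a b : ℝ} (hab : a ≤ b) (f : ℝ → ℝ) :
    ∫ x, f x ∂uniformIccM a b = (b - a)⁻¹ * ∫ x in a..b, f x := by
  rw [uniformIccM, integral_smul_measure, integral_Icc_eq_integral_Ioc,
    ← intervalIntegral.integral_of_le hab, ENNReal.toReal_inv,
    ENNReal.toReal_ofReal (sub_nonneg.2 hab), smul_eq_mul]

lemma integral_one_sub_abs_sq : ∫ x in (-1 : ℝ)..1, (1 - |x|) ^ 2 = 2 / 3 := by
  have hcont : Continuous fun x : ℝ => (1 - |x|) ^ 2 := by fun_prop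
  have hneg : ∫ x in (-1 : ℝ)..0, (1 - |x|) ^ 2 = ∫ x in (-1 : ℝ)..0, (1 + x) ^ 2 :=
    intervalIntegral.integral_congr fun x hx => by
      rw [uIcc_of_le (by norm_num)] at hx
      simp only [abs_of_nonpos hx.2, sub_neg_eq_add]
  have hpos : ∫ x in (0 : ℝ)..1, (1 - |x|) ^ 2 = ∫ x in (0 : ℝ)..1, (1 - x) ^ 2 :=
    intervalIntegral.integral_congr fun x hx => by
      rw [uIcc_of_le (by norm_num)] at hx
      simp only [abs_of_nonneg hx.1]
  rw [← intervalIntegral.integral_add_adjacent_intervals (hcont.intervalIntegrable (-1) 0)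
    (hcont.intervalIntegrable 0 1), hneg, hpos, intervalIntegral.integral_comp_add_left
    (fun x => x ^ 2), intervalIntegral.integral_comp_sub_left (fun x => x ^ 2)]
  norm_num [integral_pow]

lemma isometry_cpt_zero : Isometry fun x : ℝ => cpt x 0 := by
  refine Isometry.of_dist_eq fun x y => ?_
  simp [cpt, EuclideanSpace.dist_eq, Fin.sum_univ_two, Real.dist_eq, Real.sqrt_sq_eq_abs]

lemma cpt_mem_sphere {x y : ℝ} (h : x ^ 2 + y ^ 2 = 1) : cpt x y ∈ sphere (0 : E2) 1 := by
  simp [cpt, EuclideanSpace.norm_eq, Fin.sum_univ_two, h]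

lemma antipodal_pair_subset_sphere : ({cpt (-1) 0, cpt 1 0} : Set E2) ⊆ sphere 0 1 := by
  rintro _ (rfl | rfl) <;> exact cpt_mem_sphere (by norm_num)

lemma cDistortion_map_uniformIccM {a b : ℝ} (hab : a ≤ b) {α : Set E2} (hα : IsCompact α)
    (hne : α.Nonempty) :
    cDistortion (Measure.map (fun x : ℝ => cpt x 0) (uniformIccM a b)) α =
      (b - a)⁻¹ * ∫ x in a..b, infDist (cpt x 0) α ^ 2 := by
  rw [cDistortion_eq_integral_infDist_sq _ hα hne,
    integral_map isometry_cpt_zero.continuous.aemeasurable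
      (by fun_prop : Continuous fun x : E2 => infDist x α ^ 2).aestronglyMeasurable,
    integral_uniformIccM hab]

lemma abs_one_sub_abs_le_infDist {α : Set E2} (hα : α ⊆ sphere 0 1) (hne : α.Nonempty)
    (x : ℝ) : |(1 - |x|)| ≤ infDist (cpt x 0) α := by
  have hdist : dist (cpt x 0) 0 = |x| := by
    have h00 : cpt 0 0 = 0 := by ext i; fin_cases i <;> simp [cpt]
    rw [← h00, isometry_cpt_zero.dist_eq, Real.dist_eq, sub_zero]
  simpa [hdist, abs_sub_comm] using abs_dist_sub_radius_le_infDist hα hne (cpt x 0)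

lemma infDist_cpt_antipodal_pair {x : ℝ} (hx : x ∈ Icc (-1 : ℝ) 1) :
    infDist (cpt x 0) {cpt (-1) 0, cpt 1 0} = 1 - |x| := by
  refine le_antisymm ?_ ((le_abs_self _).trans
    (abs_one_sub_abs_le_infDist antipodal_pair_subset_sphere (insert_nonempty _ _) x))
  rcases le_total 0 x with h | h
  · calc _ ≤ dist (cpt x 0) (cpt 1 0) := infDist_le_dist_of_mem (by simp)
      _ = 1 - |x| := by
        rw [isometry_cpt_zero.dist_eq, Real.dist_eq, abs_of_nonneg h,
          abs_of_nonpos (by linarith [hx.2])]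
        ring
  · calc _ ≤ dist (cpt x 0) (cpt (-1) 0) := infDist_le_dist_of_mem (by simp)
      _ = 1 - |x| := by
        rw [isometry_cpt_zero.dist_eq, Real.dist_eq, abs_of_nonpos h,
          abs_of_nonneg (by linarith [hx.1])]
        ring

lemma one_third_le_cDistortion {α : Set E2} (hαS : α ⊆ sphere 0 1) (hα : IsCompact α)
    (hne : α.Nonempty) :
    1 / 3 ≤ cDistortion (Measure.map (fun x : ℝ => cpt x 0) (uniformIccM (-1) 1)) α := by
  have hmono :
      ∫ x in (-1 : ℝ)..1, (1 - |x|) ^ 2 ≤ ∫ x in (-1 : ℝ)..1, infDist (cpt x 0) α ^ 2 :=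
    intervalIntegral.integral_mono_on (by norm_num)
      ((by fun_prop : Continuous fun x : ℝ => (1 - |x|) ^ 2).intervalIntegrable _ _)
      ((((continuous_infDist_pt α).comp isometry_cpt_zero.continuous).pow 2).intervalIntegrable
        _ _)
      fun x _ => sq_abs (1 - |x|) ▸ pow_le_pow_left₀ (abs_nonneg _)
        (abs_one_sub_abs_le_infDist hαS hne x) 2
  rw [integral_one_sub_abs_sq] at hmono
  rw [cDistortion_map_uniformIccM (by norm_num) hα hne]
  linarith

lemma cDistortion_antipodal_pair :
    cDistortion (Measure.map (fun x : ℝ => cpt x 0) (uniformIccM (-1) 1))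
      {cpt (-1) 0, cpt 1 0} = 1 / 3 := by
  rw [cDistortion_map_uniformIccM (by norm_num) (toFinite _).isCompact (insert_nonempty _ _),
    intervalIntegral.integral_congr (g := fun x => (1 - |x|) ^ 2) fun x hx => by
      rw [uIcc_of_le (by norm_num)] at hx
      simp only [infDist_cpt_antipodal_pair hx],
    integral_one_sub_abs_sq]
  norm_num

/-- For the uniform distribution on the horizontal diameter `{(x,0) : -1 ≤ x ≤ 1}` of the unit
circle, with constraint the unit circle: for every `n ≥ 2` the `n`th constrained quantization
error equals `1/3`, and the two-point set `{(-1,0), (1,0)}` remains an optimal set of `n` points;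
in particular an optimal set of `n` points need not contain exactly `n` elements even though the
support of `P` is infinite. -/
theorem diameter_circle_constraint_n_points (n : ℕ) (hn : 2 ≤ n) :
    cqError (Measure.map (fun x : ℝ => cpt x 0) (uniformIccM (-1) 1))
      (Metric.sphere (0 : E2) 1) n = 1 / 3 ∧
    IsOptimalNSet (Measure.map (fun x : ℝ => cpt x 0) (uniformIccM (-1) 1))
      (Metric.sphere (0 : E2) 1) n {cpt (-1) 0, cpt 1 0} := by
  have hcard : ({cpt (-1) 0, cpt 1 0} : Set E2).ncard = 2 :=
    ncard_pair (isometry_cpt_zero.injective.ne (by norm_num))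
  have hopt := isOptimalNSet_of_forall_le antipodal_pair_subset_sphere (toFinite _)
    (by rw [hcard]; norm_num) (hcard ▸ hn) fun α hαS hfin hpos _ =>
      cDistortion_antipodal_pair ▸ one_third_le_cDistortion hαS hfin.isCompact
        (nonempty_of_ncard_ne_zero (by omega))
  exact ⟨hopt.2.2.2.2.symm.trans cDistortion_antipodal_pair, hopt⟩
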